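/- arXiv:math/0212215 — 3 statements merged into one kernel-verified Lean document; each statement's English description precedes it below -/
import Mathlib

section
/- Let ψ ∈ L¹(ℝ^d) be nonnegative with ∫_{|u|≥ρ} ψ(u) du ≤ c ρ^{−β} for all ρ ≥ 1, where 0 < β ≤ 1 and c > 0. Let W : ℝ^d → [0,∞) be measurable and bounded, and suppose W(h) ≤ c_Ω|h|^{β_Ω} for all |h| ≤ 2, where 0 < β_Ω ≤ 1 and c_Ω > 0. Then there exists a constant C such that for all λ ≥ 2: λ^{2d} ∫_{ℝ^d} ψ(2λx) W(2x) dx ≤ C · λ^{d−min(β,β_Ω)} if β ≠ β_Ω, and λ^{2d} ∫_{ℝ^d} ψ(2λx) W(2x) dx ≤ C · λ^{d−β} log λ if β = β_Ω. -/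
/-!
Substituting `y = 2λx` turns the left-hand side into `(λ/2)^d ∫ ψ(y) W(y/λ) dy`. Boundedness and
the Hölder bound give `W(y/λ) ≤ K min(1, (|y|/λ)^{β_Ω})`. Majorising this by a step function on
the dyadic shells `{|y| ≥ 2^k}`, `2^k ≤ λ`, and applying the tail bound on each shell yields
`∫ ψ(y) W(y/λ) dy ≲ λ^{-β_Ω} ∑_{2^k ≤ λ} 2^{k(β_Ω - β)}`. The geometric sum is bounded if
`β_Ω < β`, is `≲ λ^{β_Ω - β}` if `β_Ω > β`, and has `≲ log λ` terms if `β = β_Ω`.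
-/

open MeasureTheory
open scoped ENNReal

noncomputable section

/-- Euclidean space `ℝ^d`. -/
abbrev Ed (d : ℕ) := EuclideanSpace ℝ (Fin d)

open Finset

theorem le_max_mul_min_one_rpow {E : Type*} [NormedAddCommGroup E] {W : E → ℝ} {M c a : ℝ}
    (hM : ∀ h, W h ≤ M) (hW : ∀ h, ‖h‖ ≤ 1 → W h ≤ c * ‖h‖ ^ a) (ha : 0 ≤ a) (h : E) :
    W h ≤ max M c * min 1 (‖h‖ ^ a) := by
  rcases le_or_gt ‖h‖ 1 with hh | hh
  · rw [min_eq_right (Real.rpow_le_one (norm_nonneg h) hh ha)]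
    exact (hW h hh).trans (mul_le_mul_of_nonneg_right (le_max_right M c) (by positivity))
  · rw [min_eq_left (Real.one_le_rpow hh.le ha), mul_one]
    exact (hM h).trans (le_max_left M c)

def dyadicStep (a lam : ℝ) (N : ℕ) (r : ℝ) : ℝ :=
  lam ^ (-a) +
    ∑ k ∈ range (N + 1), {s : ℝ | 2 ^ k ≤ s}.indicator (fun _ ↦ ((2 : ℝ) ^ (k + 1) / lam) ^ a) r

theorem min_one_rpow_div_le_dyadicStep {a lam r : ℝ} {N : ℕ} (ha : 0 ≤ a) (hlam : 0 < lam)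
    (hN : lam < 2 ^ (N + 1)) (hr : 0 ≤ r) : min 1 ((r / lam) ^ a) ≤ dyadicStep a lam N r := by
  have hind : ∀ k : ℕ,
      0 ≤ {s : ℝ | 2 ^ k ≤ s}.indicator (fun _ ↦ ((2 : ℝ) ^ (k + 1) / lam) ^ a) r :=
    fun k ↦ Set.indicator_nonneg (fun _ _ ↦ by positivity) r
  rcases lt_or_ge r 1 with hr1 | hr1
  · calc min 1 ((r / lam) ^ a) ≤ (1 / lam) ^ a :=
          (min_le_right _ _).trans (Real.rpow_le_rpow (by positivity) (by gcongr) ha)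
      _ = lam ^ (-a) := by rw [one_div, Real.inv_rpow hlam.le, Real.rpow_neg hlam.le]
      _ ≤ _ := le_add_of_nonneg_right (sum_nonneg fun k _ ↦ hind k)
  · -- A single summand suffices: the one at `k = min m N`, where `2 ^ m ≤ r < 2 ^ (m + 1)`.
    obtain ⟨m, hm, hm'⟩ := exists_nat_pow_near hr1 one_lt_two
    have hk : r ∈ {s : ℝ | 2 ^ min m N ≤ s} :=
      (pow_le_pow_right₀ one_le_two (min_le_left m N)).trans hm
    have hbound : min 1 ((r / lam) ^ a) ≤ ((2 : ℝ) ^ (min m N + 1) / lam) ^ a := by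
      rcases le_total m N with hmN | hNm
      · rw [min_eq_left hmN]
        exact (min_le_right _ _).trans (Real.rpow_le_rpow (by positivity) (by gcongr) ha)
      · rw [min_eq_right hNm]
        exact (min_le_left _ _).trans (Real.one_le_rpow ((one_le_div hlam).2 hN.le) ha)
    calc min 1 ((r / lam) ^ a)
        ≤ {s : ℝ | 2 ^ min m N ≤ s}.indicator
            (fun _ ↦ ((2 : ℝ) ^ (min m N + 1) / lam) ^ a) r := by
          rwa [Set.indicator_of_mem hk]
      _ ≤ ∑ k ∈ range (N + 1),
            {s : ℝ | 2 ^ k ≤ s}.indicator (fun _ ↦ ((2 : ℝ) ^ (k + 1) / lam) ^ a) r :=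
          single_le_sum (fun k _ ↦ hind k) (mem_range.2 (Nat.lt_succ_of_le (min_le_right m N)))
      _ ≤ _ := le_add_of_nonneg_left (by positivity)

theorem mul_dyadicStep_norm {E : Type*} [NormedAddCommGroup E] (a lam : ℝ) (N : ℕ)
    (ψ : E → ℝ) (y : E) :
    ψ y * dyadicStep a lam N ‖y‖ = lam ^ (-a) * ψ y +
      ∑ k ∈ range (N + 1),
        ((2 : ℝ) ^ (k + 1) / lam) ^ a * {y : E | 2 ^ k ≤ ‖y‖}.indicator ψ y := by
  simp only [dyadicStep, mul_add, mul_sum]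
  congr 1
  · ring
  refine sum_congr rfl fun k _ ↦ ?_
  by_cases h : (2 : ℝ) ^ k ≤ ‖y‖ <;> simp [Set.indicator, h, mul_comm]

section Integral

variable {E : Type*} [NormedAddCommGroup E] [MeasurableSpace E] [OpensMeasurableSpace E]
  {μ : Measure E} {ψ : E → ℝ}

theorem measurableSet_two_pow_le_norm (k : ℕ) : MeasurableSet {y : E | (2 : ℝ) ^ k ≤ ‖y‖} :=
  measurableSet_le measurable_const measurable_norm

theorem integrable_mul_dyadicStep_norm (hψ : Integrable ψ μ) (a lam : ℝ) (N : ℕ) :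
    Integrable (fun y ↦ ψ y * dyadicStep a lam N ‖y‖) μ := by
  simp_rw [mul_dyadicStep_norm]
  exact (hψ.const_mul _).add (integrable_finsetSum _ fun k _ ↦
    (hψ.indicator (measurableSet_two_pow_le_norm k)).const_mul _)

theorem integral_mul_dyadicStep_norm (hψ : Integrable ψ μ) (a lam : ℝ) (N : ℕ) :
    ∫ y, ψ y * dyadicStep a lam N ‖y‖ ∂μ = lam ^ (-a) * ∫ y, ψ y ∂μ +
      ∑ k ∈ range (N + 1),
        ((2 : ℝ) ^ (k + 1) / lam) ^ a * ∫ y in {y | 2 ^ k ≤ ‖y‖}, ψ y ∂μ := by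
  have hint : ∀ k ∈ range (N + 1), Integrable (fun y ↦
      ((2 : ℝ) ^ (k + 1) / lam) ^ a * {y : E | 2 ^ k ≤ ‖y‖}.indicator ψ y) μ :=
    fun k _ ↦ (hψ.indicator (measurableSet_two_pow_le_norm k)).const_mul _
  simp_rw [mul_dyadicStep_norm]
  rw [integral_add (hψ.const_mul _) (integrable_finsetSum _ hint), integral_finsetSum _ hint,
    integral_const_mul]
  simp_rw [integral_const_mul, integral_indicator (measurableSet_two_pow_le_norm _)]

end Integral

theorem two_pow_succ_div_rpow_mul_rpow_neg (a b : ℝ) {lam : ℝ} (hlam : 0 < lam) (k : ℕ) :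
    ((2 : ℝ) ^ (k + 1) / lam) ^ a * ((2 : ℝ) ^ k) ^ (-b) =
      2 ^ a * lam ^ (-a) * ((2 : ℝ) ^ (a - b)) ^ k := by
  have h2 : (0 : ℝ) < 2 := two_pos
  rw [Real.div_rpow (by positivity) hlam.le, Real.rpow_neg hlam.le, ← Real.rpow_natCast,
    ← Real.rpow_natCast, ← Real.rpow_natCast, ← Real.rpow_mul h2.le, ← Real.rpow_mul h2.le,
    ← Real.rpow_mul h2.le, div_eq_mul_inv, mul_right_comm, ← Real.rpow_add h2,
    mul_right_comm (2 ^ a), ← Real.rpow_add h2]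
  push_cast
  ring_nf

theorem integral_mul_comp_inv_smul_le {E : Type*} [NormedAddCommGroup E] [NormedSpace ℝ E]
    [MeasurableSpace E] [OpensMeasurableSpace E] {μ : Measure E} {ψ W : E → ℝ}
    (hψ : Integrable ψ μ) (hψ0 : ∀ y, 0 ≤ ψ y) {b c : ℝ}
    (htail : ∀ ρ : ℝ, 1 ≤ ρ → ∫ u in {u | ρ ≤ ‖u‖}, ψ u ∂μ ≤ c * ρ ^ (-b))
    (hW0 : ∀ h, 0 ≤ W h) {K a : ℝ} (hK : 0 ≤ K) (ha : 0 ≤ a)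
    (hW : ∀ h, W h ≤ K * min 1 (‖h‖ ^ a)) {lam : ℝ} (hlam : 0 < lam) {N : ℕ}
    (hN : lam < 2 ^ (N + 1)) :
    ∫ y, ψ y * W (lam⁻¹ • y) ∂μ ≤ K * (∫ y, ψ y ∂μ + 2 ^ a * c) *
      (lam ^ (-a) * ∑ k ∈ range (N + 1), ((2 : ℝ) ^ (a - b)) ^ k) := by
  set S := ∑ k ∈ range (N + 1), ((2 : ℝ) ^ (a - b)) ^ k
  have hmaj : ∀ y, ψ y * W (lam⁻¹ • y) ≤ K * (ψ y * dyadicStep a lam N ‖y‖) := fun y ↦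
    calc ψ y * W (lam⁻¹ • y) ≤ ψ y * (K * min 1 ((‖y‖ / lam) ^ a)) := by
          gcongr
          · exact hψ0 y
          · simpa [norm_smul, abs_of_pos hlam, div_eq_inv_mul] using hW (lam⁻¹ • y)
      _ ≤ ψ y * (K * dyadicStep a lam N ‖y‖) := by
          gcongr
          · exact hψ0 y
          · exact min_one_rpow_div_le_dyadicStep ha hlam hN (norm_nonneg y)
      _ = K * (ψ y * dyadicStep a lam N ‖y‖) := by ring
  have hshell : ∀ k ∈ range (N + 1),
      ((2 : ℝ) ^ (k + 1) / lam) ^ a * ∫ y in {y | 2 ^ k ≤ ‖y‖}, ψ y ∂μ ≤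
        2 ^ a * c * lam ^ (-a) * ((2 : ℝ) ^ (a - b)) ^ k := fun k _ ↦
    calc _ ≤ ((2 : ℝ) ^ (k + 1) / lam) ^ a * (c * ((2 : ℝ) ^ k) ^ (-b)) := by
          gcongr
          exact htail _ (one_le_pow₀ one_le_two)
      _ = _ := by rw [mul_left_comm, two_pow_succ_div_rpow_mul_rpow_neg a b hlam]; ring
  -- The `k = 0` summand of `S` is `1`, which absorbs the contribution of the unit ball.
  have hS : 1 ≤ S := by
    simpa using single_le_sum (f := fun k ↦ ((2 : ℝ) ^ (a - b)) ^ k) (fun k _ ↦ by positivity)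
      (mem_range.2 N.succ_pos)
  have hI : 0 ≤ ∫ y, ψ y ∂μ := integral_nonneg hψ0
  calc _ ≤ ∫ y, K * (ψ y * dyadicStep a lam N ‖y‖) ∂μ :=
        integral_mono_of_nonneg (ae_of_all _ fun y ↦ mul_nonneg (hψ0 y) (hW0 _))
          ((integrable_mul_dyadicStep_norm hψ a lam N).const_mul K) (ae_of_all _ hmaj)
    _ = K * (lam ^ (-a) * ∫ y, ψ y ∂μ + ∑ k ∈ range (N + 1),
        ((2 : ℝ) ^ (k + 1) / lam) ^ a * ∫ y in {y | 2 ^ k ≤ ‖y‖}, ψ y ∂μ) := by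
        rw [integral_const_mul, integral_mul_dyadicStep_norm hψ]
    _ ≤ K * (lam ^ (-a) * (∫ y, ψ y ∂μ) * S + 2 ^ a * c * lam ^ (-a) * S) := by
        refine mul_le_mul_of_nonneg_left (add_le_add ?_ ?_) hK
        · exact le_mul_of_one_le_right (by positivity) hS
        · rw [mul_sum]
          exact sum_le_sum hshell
    _ = _ := by ring

theorem exists_rpow_neg_mul_geom_sum_le {a b : ℝ} (hab : a ≠ b) :
    ∃ C, ∀ lam : ℝ, 1 ≤ lam → ∀ N : ℕ, 2 ^ N ≤ lam →
      lam ^ (-a) * ∑ k ∈ range (N + 1), ((2 : ℝ) ^ (a - b)) ^ k ≤ C * lam ^ (-min a b) := by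
  set q := (2 : ℝ) ^ (a - b)
  rcases hab.lt_or_gt with h | h
  · have hq : q < 1 := Real.rpow_lt_one_of_one_lt_of_neg one_lt_two (sub_neg.2 h)
    refine ⟨1 / (1 - q), fun lam hlam N _ ↦ ?_⟩
    rw [min_eq_left h.le, mul_comm]
    have hsum := geom_sum_Ico_le_of_lt_one (m := 0) (n := N + 1) (by positivity) hq
    rw [← range_eq_Ico, pow_zero] at hsum
    exact mul_le_mul_of_nonneg_right hsum (by positivity)
  · have hq : 1 < q := Real.one_lt_rpow one_lt_two (sub_pos.2 h)
    refine ⟨q / (q - 1), fun lam hlam N hN ↦ ?_⟩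
    have hqN : q ^ N ≤ lam ^ (a - b) := by
      rw [Real.rpow_pow_comm two_pos.le]
      exact Real.rpow_le_rpow (by positivity) hN (sub_pos.2 h).le
    have hlam0 : 0 < lam := by linarith
    calc lam ^ (-a) * ∑ k ∈ range (N + 1), q ^ k
        = lam ^ (-a) * ((q ^ (N + 1) - 1) / (q - 1)) := by rw [geom_sum_eq hq.ne']
      _ ≤ lam ^ (-a) * (q / (q - 1) * lam ^ (a - b)) := by
          gcongr
          calc (q ^ (N + 1) - 1) / (q - 1) ≤ q ^ (N + 1) / (q - 1) := by
                gcongr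
                linarith
            _ = q / (q - 1) * q ^ N := by ring
            _ ≤ q / (q - 1) * lam ^ (a - b) := by gcongr
      _ = q / (q - 1) * lam ^ (-min a b) := by
          rw [min_eq_right h.le, mul_left_comm, ← Real.rpow_add hlam0]
          ring_nf

theorem natCast_add_one_le_mul_log {lam : ℝ} {N : ℕ} (hlam : 2 ≤ lam) (hN : 2 ^ N ≤ lam) :
    (N + 1 : ℝ) ≤ 2 / Real.log 2 * Real.log lam := by
  have hlog2 : 0 < Real.log 2 := Real.log_pos one_lt_two
  have hN' : N * Real.log 2 ≤ Real.log lam := by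
    simpa [Real.log_pow] using Real.log_le_log (by positivity) hN
  have h2 : Real.log 2 ≤ Real.log lam := Real.log_le_log two_pos hlam
  rw [div_mul_eq_mul_div, le_div_iff₀ hlog2]
  linarith

theorem pow_two_mul_integral_comp_smul {E : Type*} [NormedAddCommGroup E] [NormedSpace ℝ E]
    [MeasurableSpace E] [BorelSpace E] [FiniteDimensional ℝ E] (μ : Measure E)
    [μ.IsAddHaarMeasure] (ψ W : E → ℝ) {lam : ℝ} (hlam : 0 < lam) :
    lam ^ (2 * Module.finrank ℝ E) * ∫ x, ψ ((2 * lam) • x) * W ((2 : ℝ) • x) ∂μ =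
      (lam / 2) ^ Module.finrank ℝ E * ∫ y, ψ y * W (lam⁻¹ • y) ∂μ := by
  have h : ∀ x : E, ψ ((2 * lam) • x) * W ((2 : ℝ) • x) =
      ψ ((2 * lam) • x) * W (lam⁻¹ • (2 * lam) • x) := fun x ↦ by
    rw [smul_smul, mul_left_comm, inv_mul_cancel₀ hlam.ne', mul_one]
  simp_rw [h]
  rw [Measure.integral_comp_smul_of_nonneg μ (fun y ↦ ψ y * W (lam⁻¹ • y)) (2 * lam)
    (hR := by positivity), smul_eq_mul, mul_pow, pow_mul', div_pow]
  field_simp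

theorem pow_mul_integral_comp_two_mul_smul_le {E : Type*} [NormedAddCommGroup E]
    [NormedSpace ℝ E] [MeasurableSpace E] [BorelSpace E] [FiniteDimensional ℝ E] {μ : Measure E}
    [μ.IsAddHaarMeasure] {ψ W : E → ℝ} (hψ : Integrable ψ μ) (hψ0 : ∀ y, 0 ≤ ψ y) {b c : ℝ}
    (htail : ∀ ρ : ℝ, 1 ≤ ρ → ∫ u in {u | ρ ≤ ‖u‖}, ψ u ∂μ ≤ c * ρ ^ (-b))
    (hW0 : ∀ h, 0 ≤ W h) {K a : ℝ} (hK : 0 ≤ K) (ha : 0 ≤ a)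
    (hW : ∀ h, W h ≤ K * min 1 (‖h‖ ^ a)) {lam : ℝ} (hlam : 0 < lam) {N : ℕ}
    (hN : lam < 2 ^ (N + 1)) :
    lam ^ (2 * Module.finrank ℝ E) * ∫ x, ψ ((2 * lam) • x) * W ((2 : ℝ) • x) ∂μ ≤
      K * (∫ y, ψ y ∂μ + 2 ^ a * c) / 2 ^ Module.finrank ℝ E * lam ^ Module.finrank ℝ E *
        (lam ^ (-a) * ∑ k ∈ range (N + 1), ((2 : ℝ) ^ (a - b)) ^ k) :=
  calc _ = (lam / 2) ^ Module.finrank ℝ E * ∫ y, ψ y * W (lam⁻¹ • y) ∂μ :=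
        pow_two_mul_integral_comp_smul μ ψ W hlam
    _ ≤ (lam / 2) ^ Module.finrank ℝ E * (K * (∫ y, ψ y ∂μ + 2 ^ a * c) *
          (lam ^ (-a) * ∑ k ∈ range (N + 1), ((2 : ℝ) ^ (a - b)) ^ k)) := by
        gcongr
        exact integral_mul_comp_inv_smul_le hψ hψ0 htail hW0 hK ha hW hlam hN
    _ = _ := by rw [div_pow]; ring

theorem statement12_general (d : ℕ)
    (ψ : Ed d → ℝ) (hψint : Integrable ψ) (hψpos : ∀ u, 0 ≤ ψ u)
    (β c : ℝ) (hc : 0 < c)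
    (hψtail : ∀ ρ : ℝ, 1 ≤ ρ → ∫ u in {u : Ed d | ρ ≤ ‖u‖}, ψ u ≤ c * ρ ^ (-β))
    (W : Ed d → ℝ) (hWpos : ∀ h, 0 ≤ W h)
    (hWbdd : ∃ M : ℝ, ∀ h, W h ≤ M)
    (βΩ cΩ : ℝ) (hβΩ : 0 < βΩ ∧ βΩ ≤ 1)
    (hW : ∀ h : Ed d, ‖h‖ ≤ 2 → W h ≤ cΩ * ‖h‖ ^ βΩ) :
    ∃ C : ℝ, ∀ lam : ℝ, 2 ≤ lam →
      (β ≠ βΩ →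
        lam ^ (2 * d) * ∫ x : Ed d, ψ ((2 * lam) • x) * W ((2 : ℝ) • x) ≤
          C * lam ^ ((d : ℝ) - min β βΩ)) ∧
      (β = βΩ →
        lam ^ (2 * d) * ∫ x : Ed d, ψ ((2 * lam) • x) * W ((2 : ℝ) • x) ≤
          C * lam ^ ((d : ℝ) - β) * Real.log lam) := by
  obtain ⟨M, hM⟩ := hWbdd
  have hK : 0 ≤ max M cΩ := (hWpos 0).trans ((hM 0).trans (le_max_left M cΩ))
  have hI : 0 ≤ ∫ u, ψ u := integral_nonneg hψpos
  obtain ⟨C₀, hC₀, hmain⟩ : ∃ C₀ : ℝ, 0 ≤ C₀ ∧ ∀ lam : ℝ, 0 < lam → ∀ N : ℕ, lam < 2 ^ (N + 1) →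
      lam ^ (2 * d) * ∫ x : Ed d, ψ ((2 * lam) • x) * W ((2 : ℝ) • x) ≤
        C₀ * lam ^ d * (lam ^ (-βΩ) * ∑ k ∈ range (N + 1), ((2 : ℝ) ^ (βΩ - β)) ^ k) :=
    ⟨max M cΩ * ((∫ u, ψ u) + 2 ^ βΩ * c) / 2 ^ d, by positivity, fun lam hlam N hN ↦ by
      simpa only [finrank_euclideanSpace_fin] using
        pow_mul_integral_comp_two_mul_smul_le hψint hψpos hψtail hWpos hK hβΩ.1.le
          (le_max_mul_min_one_rpow hM (fun h hh ↦ hW h (by linarith)) hβΩ.1.le)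
          hlam hN⟩
  rcases eq_or_ne β βΩ with rfl | hne
  · refine ⟨C₀ * (2 / Real.log 2), fun lam hlam ↦ ⟨fun h ↦ absurd rfl h, fun _ ↦ ?_⟩⟩
    obtain ⟨N, hN, hN'⟩ := exists_nat_pow_near (by linarith : 1 ≤ lam) one_lt_two
    calc _ ≤ _ := hmain lam (by linarith) N hN'
      _ = C₀ * lam ^ d * (lam ^ (-β) * (N + 1)) := by simp
      _ ≤ C₀ * lam ^ d * (lam ^ (-β) * (2 / Real.log 2 * Real.log lam)) := by
          gcongr
          exact natCast_add_one_le_mul_log hlam hN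
      _ = _ := by rw [sub_eq_add_neg, Real.rpow_add (by linarith), Real.rpow_natCast]; ring
  · obtain ⟨C, hC⟩ := exists_rpow_neg_mul_geom_sum_le hne.symm
    refine ⟨C₀ * C, fun lam hlam ↦ ⟨fun _ ↦ ?_, fun h ↦ absurd h hne⟩⟩
    obtain ⟨N, hN, hN'⟩ := exists_nat_pow_near (by linarith : 1 ≤ lam) one_lt_two
    calc _ ≤ _ := hmain lam (by linarith) N hN'
      _ ≤ C₀ * lam ^ d * (C * lam ^ (-min βΩ β)) :=
          mul_le_mul_of_nonneg_left (hC lam (by linarith) N hN) (by positivity)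
      _ = _ := by
          rw [min_comm, sub_eq_add_neg, Real.rpow_add (by linarith), Real.rpow_natCast]; ring

/-- if `ψ ∈ L¹(ℝ^d)` is nonnegative with `∫_{|u|≥ρ} ψ ≤ c ρ^{−β}` for
`ρ ≥ 1`, and `W ≥ 0` is measurable, bounded, with `W(h) ≤ c_Ω|h|^{β_Ω}` for `|h| ≤ 2`, then
`λ^{2d} ∫ ψ(2λx) W(2x) dx ≤ C λ^{d−min(β,β_Ω)}` (resp. `≤ C λ^{d−β} log λ` if `β = β_Ω`)
for all `λ ≥ 2`. -/
theorem statement12 (d : ℕ) (hd : 0 < d)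
    (ψ : Ed d → ℝ) (hψint : Integrable ψ) (hψpos : ∀ u, 0 ≤ ψ u)
    (β c : ℝ) (hβ : 0 < β ∧ β ≤ 1) (hc : 0 < c)
    (hψtail : ∀ ρ : ℝ, 1 ≤ ρ → ∫ u in {u : Ed d | ρ ≤ ‖u‖}, ψ u ≤ c * ρ ^ (-β))
    (W : Ed d → ℝ) (hWmeas : Measurable W) (hWpos : ∀ h, 0 ≤ W h)
    (hWbdd : ∃ M : ℝ, ∀ h, W h ≤ M)
    (βΩ cΩ : ℝ) (hβΩ : 0 < βΩ ∧ βΩ ≤ 1) (hcΩ : 0 < cΩ)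
    (hW : ∀ h : Ed d, ‖h‖ ≤ 2 → W h ≤ cΩ * ‖h‖ ^ βΩ) :
    ∃ C : ℝ, ∀ lam : ℝ, 2 ≤ lam →
      (β ≠ βΩ →
        lam ^ (2 * d) * ∫ x : Ed d, ψ ((2 * lam) • x) * W ((2 : ℝ) • x) ≤
          C * lam ^ ((d : ℝ) - min β βΩ)) ∧
      (β = βΩ →
        lam ^ (2 * d) * ∫ x : Ed d, ψ ((2 * lam) • x) * W ((2 : ℝ) • x) ≤
          C * lam ^ ((d : ℝ) - β) * Real.log lam) :=
  statement12_general d ψ hψint hψpos β c hc hψtail W hWpos hWbdd βΩ cΩ hβΩ hW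
end
end

section
/- Let R be a (not necessarily commutative) ring with identity 1, let P ∈ R satisfy P² = P, set Q = 1 − P, and let A ∈ R. Then for every integer m ≥ 2: P A^m P − (P A P)^m = Σ_{j=1}^{m−1} (P A)^{m−j} Q A (P A)^{j−1} P + Σ_{j=2}^{m−1} Σ_{k=1}^{j−1} (P A)^{m−j} Q A^k Q (A P)^{j−k} P, where the second (double) sum is empty when m = 2. -/
section Aux

variable {R : Type*} [Ring R] (P A : R)

private lemma aux_pow2 (n : ℕ) : (A * P) ^ (n + 1) = A * (P * A) ^ n * P := by
  induction n with
  | zero => simp [mul_assoc]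
  | succ k ih =>
    rw [pow_succ, ih, pow_succ]
    simp [mul_assoc]

private lemma aux_pow1 (hP : P * P = P) (n : ℕ) :
    (P * A) ^ (n + 1) * P = (P * A * P) ^ (n + 1) := by
  induction n with
  | zero => simp
  | succ k ih =>
    rw [pow_succ (P * A), pow_succ (P * A * P), ← ih]
    simp only [mul_assoc]
    rw [← mul_assoc P P, hP]

private lemma aux_pow3 (hP : P * P = P) (n : ℕ) :
    (A * P) ^ (n + 1) * P = (A * P) ^ (n + 1) := by
  rw [aux_pow2, mul_assoc, hP]

/-- Inner telescoping: `Q A^{i+1} P = Q A (PA)^i P + Σ_{k=1}^{i} Q A^k Q (AP)^{i+1-k} P`. -/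
private lemma aux_inner (hP : P * P = P) (i : ℕ) :
    (1 - P) * A ^ (i + 1) * P =
      (1 - P) * A * (P * A) ^ i * P +
      ∑ k ∈ Finset.Icc 1 i, (1 - P) * A ^ k * (1 - P) * (A * P) ^ (i + 1 - k) * P := by
  have tel := Finset.sum_range_sub (fun k => (1 - P) * (A ^ k * (A * P) ^ (i + 1 - k))) i
  have hsum : ∑ k ∈ Finset.Icc 1 i, (1 - P) * A ^ k * (1 - P) * (A * P) ^ (i + 1 - k) * P
      = ∑ k ∈ Finset.range i,
        ((1 - P) * (A ^ (k + 1) * (A * P) ^ (i + 1 - (k + 1)))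
          - (1 - P) * (A ^ k * (A * P) ^ (i + 1 - k))) := by
    rw [← Finset.Ico_add_one_right_eq_Icc, Finset.sum_Ico_eq_sum_range]
    simp only [Nat.succ_sub_one, Nat.add_sub_cancel]
    apply Finset.sum_congr rfl
    intro k hk
    have hk' : k < i := by simpa using hk
    obtain ⟨d, hd⟩ : ∃ d, i - k = d + 1 := ⟨i - k - 1, by omega⟩
    rw [show i + 1 - (1 + k) = d + 1 from by omega,
      show i + 1 - (k + 1) = d + 1 from by omega,
      show i + 1 - k = d + 2 from by omega,
      show (1:ℕ) + k = k + 1 from by omega]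
    have hp3 : ∀ X : R, X * (A * P) ^ (d + 1) * P = X * (A * P) ^ (d + 1) := by
      intro X
      rw [mul_assoc, aux_pow3 P A hP d]
    rw [hp3, pow_succ A k, pow_succ' (A * P) (d + 1)]
    noncomm_ring
  rw [hsum, tel]
  have hL : (1 - P) * (A ^ i * (A * P) ^ (i + 1 - i)) = (1 - P) * A ^ (i + 1) * P := by
    rw [show i + 1 - i = 1 from by omega, pow_one, pow_succ, mul_assoc, mul_assoc]
  have hR : (1 - P) * (A ^ 0 * (A * P) ^ (i + 1 - 0)) = (1 - P) * A * (P * A) ^ i * P := by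
    rw [pow_zero, one_mul, Nat.sub_zero, aux_pow2]
    noncomm_ring
  rw [hL, hR]
  abel

end Aux

/-- the algebraic identity \eqref{eqsum2}: in any ring, if `P² = P` and
`Q = 1 − P`, then for every `m ≥ 2`,
`P A^m P − (P A P)^m = Σ_{j=1}^{m−1} (PA)^{m−j} Q A (PA)^{j−1} P
  + Σ_{j=2}^{m−1} Σ_{k=1}^{j−1} (PA)^{m−j} Q A^k Q (AP)^{j−k} P`. -/
theorem statement14 {R : Type*} [Ring R] (P A : R) (hP : P * P = P) (m : ℕ) (hm : 2 ≤ m) :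
    P * A ^ m * P - (P * A * P) ^ m =
      (∑ j ∈ Finset.Icc 1 (m - 1),
        (P * A) ^ (m - j) * (1 - P) * A * (P * A) ^ (j - 1) * P) +
      ∑ j ∈ Finset.Icc 2 (m - 1), ∑ k ∈ Finset.Icc 1 (j - 1),
        (P * A) ^ (m - j) * (1 - P) * A ^ k * (1 - P) * (A * P) ^ (j - k) * P := by
  obtain ⟨n, rfl⟩ : ∃ n, m = n + 2 := ⟨m - 2, by omega⟩
  have hm1 : n + 2 - 1 = n + 1 := rfl
  rw [hm1]
  -- Step 1: outer telescoping
  have tel := Finset.sum_range_sub (fun i => (P * A) ^ (n + 2 - i) * A ^ i * P) (n + 1)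
  have hstep1 : P * A ^ (n + 2) * P - (P * A * P) ^ (n + 2)
      = ∑ i ∈ Finset.range (n + 1), (P * A) ^ (n + 1 - i) * ((1 - P) * A ^ (i + 1) * P) := by
    have hend : (P * A) ^ (n + 2 - (n + 1)) * A ^ (n + 1) * P = P * A ^ (n + 2) * P := by
      rw [show n + 2 - (n + 1) = 1 from by omega, pow_one, pow_succ' A (n + 1)]
      noncomm_ring
    have hzero : (P * A) ^ (n + 2 - 0) * A ^ 0 * P = (P * A * P) ^ (n + 2) := by
      rw [Nat.sub_zero, pow_zero, mul_one, show n + 2 = (n + 1) + 1 from rfl,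
        aux_pow1 P A hP]
    rw [← hend, ← hzero, ← tel]
    apply Finset.sum_congr rfl
    intro i hi
    have hi' : i < n + 1 := by simpa using hi
    have h1 : n + 2 - (i + 1) = n + 1 - i := by omega
    have h2 : n + 2 - i = (n + 1 - i) + 1 := by omega
    simp only [h1, h2]
    rw [pow_succ (P * A), pow_succ' A i]
    noncomm_ring
  rw [hstep1]
  -- Step 2: expand each term with the inner lemma
  have hstep2 : ∀ i ∈ Finset.range (n + 1),
      (P * A) ^ (n + 1 - i) * ((1 - P) * A ^ (i + 1) * P)
        = (P * A) ^ (n + 1 - i) * (1 - P) * A * (P * A) ^ i * P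
          + ∑ k ∈ Finset.Icc 1 i,
            (P * A) ^ (n + 1 - i) * (1 - P) * A ^ k * (1 - P) * (A * P) ^ (i + 1 - k) * P := by
    intro i _
    rw [aux_inner P A hP i, mul_add, Finset.mul_sum]
    congr 1
    · noncomm_ring
    · apply Finset.sum_congr rfl
      intro k _
      noncomm_ring
  rw [Finset.sum_congr rfl hstep2, Finset.sum_add_distrib]
  congr 1
  · -- first sums agree
    rw [← Finset.Ico_add_one_right_eq_Icc, Finset.sum_Ico_eq_sum_range]
    simp only [Nat.succ_sub_one, Nat.add_sub_cancel]
    apply Finset.sum_congr rfl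
    intro i hi
    have h1 : n + 2 - (1 + i) = n + 1 - i := by omega
    have h2 : 1 + i - 1 = i := by omega
    rw [h1, h2]
  · -- double sums agree
    have h0 : (∑ k ∈ Finset.Icc 1 0,
        (P * A) ^ (n + 1 - 0) * (1 - P) * A ^ k * (1 - P) * (A * P) ^ (0 + 1 - k) * P) = 0 := by
      simp
    rw [Finset.sum_range_succ', h0, add_zero,
      show Finset.Icc 2 (n + 1) = Finset.Ico 2 (n + 1 + 1) from (Finset.Ico_add_one_right_eq_Icc 2 (n + 1)).symm,
      Finset.sum_Ico_eq_sum_range]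
    simp only [show n + 1 + 1 - 2 = n from by omega]
    apply Finset.sum_congr rfl
    intro i hi
    have h1 : n + 1 - (i + 1) = n + 2 - (2 + i) := by omega
    have h2 : 2 + i - 1 = i + 1 := by omega
    rw [h1, h2]
    apply Finset.sum_congr rfl
    intro k hk
    have hk' : 1 ≤ k ∧ k ≤ i + 1 := by simpa using hk
    have h3 : i + 1 + 1 - k = 2 + i - k := by omega
    rw [h3]
end

section
/- Let g ∈ L¹(ℝ^d) be nonnegative and suppose there are 0 < β ≤ 1 and c > 0 such that ∫_{|u|≥ρ} g(u) du ≤ c ρ^{−β} for all ρ ≥ 1. Define h(u) = ∫_{ℝ^d} g(u−v)(1+|v|)^{−d−1} dv. Then h ∈ L¹(ℝ^d) and there exists C > 0 such that ∫_{|u|≥ρ} h(u) du ≤ C ρ^{−β} for all ρ ≥ 1. -/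
/-!
Write `h = g ⋆ k` with `k v = (1 + |v|)^(-d-1)`. Since `|u| ≥ ρ` forces `|v| ≥ ρ/2` or
`|u - v| ≥ ρ/2`, Fubini bounds the mass of `h` outside the ball of radius `ρ` by
`‖g‖₁ ∫_{|v| ≥ ρ/2} k + ‖k‖₁ ∫_{|w| ≥ ρ/2} g`. In polar coordinates `∫_{|v| ≥ r} k ≲ r⁻¹`, which
is `≲ r^(-β)` because `β ≤ 1`, and the tail of `g` at `ρ/2` is `≲ ρ^(-β)` by hypothesis.
-/

open MeasureTheory Set Module

noncomputable section

section Kernel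

lemma setIntegral_Ioi_pow_mul_one_add_rpow_le {n : ℕ} (hn : 0 < n) {s r : ℝ} (hs : n < s)
    (hr : 0 < r) :
    ∫ y in Ioi r, y ^ (n - 1) * (1 + y) ^ (-s) ≤ r ^ (n - s) / (s - n) := by
  have hexp : (n : ℝ) - 1 - s < -1 := by linarith
  have hmaj : IntegrableOn (fun y : ℝ => y ^ ((n : ℝ) - 1 - s)) (Ioi r) :=
    integrableOn_Ioi_rpow_of_lt hexp hr
  have hle : ∀ y ∈ Ioi r, y ^ (n - 1) * (1 + y) ^ (-s) ≤ y ^ ((n : ℝ) - 1 - s) := by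
    intro y (hy : r < y)
    have hy0 : 0 < y := hr.trans hy
    calc y ^ (n - 1) * (1 + y) ^ (-s) ≤ y ^ ((n - 1 : ℕ) : ℝ) * y ^ (-s) := by
          rw [Real.rpow_natCast]
          exact mul_le_mul_of_nonneg_left (Real.rpow_le_rpow_of_nonpos hy0 (by linarith)
            (by linarith [n.cast_nonneg (α := ℝ)])) (by positivity)
      _ = y ^ ((n : ℝ) - 1 - s) := by
          rw [← Real.rpow_add hy0, Nat.cast_sub hn, Nat.cast_one, sub_eq_add_neg _ s]
  have hint : IntegrableOn (fun y : ℝ => y ^ (n - 1) * (1 + y) ^ (-s)) (Ioi r) := by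
    refine hmaj.mono' (by fun_prop) ?_
    filter_upwards [ae_restrict_mem measurableSet_Ioi] with y (hy : r < y)
    rw [Real.norm_of_nonneg (by have := hr.trans hy; positivity)]
    exact hle y hy
  calc ∫ y in Ioi r, y ^ (n - 1) * (1 + y) ^ (-s)
      ≤ ∫ y in Ioi r, y ^ ((n : ℝ) - 1 - s) := setIntegral_mono_on hint hmaj measurableSet_Ioi hle
    _ = r ^ (n - s) / (s - n) := by
      rw [integral_Ioi_rpow_of_lt hexp hr, neg_div, ← div_neg]
      ring_nf

variable {E : Type*} [NormedAddCommGroup E] [NormedSpace ℝ E] [FiniteDimensional ℝ E]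
  [MeasurableSpace E] [BorelSpace E] (μ : Measure E) [μ.IsAddHaarMeasure]

lemma setIntegral_norm_ge_one_add_norm_rpow_le [Nontrivial E] {s r : ℝ} (hs : finrank ℝ E < s)
    (hr : 0 < r) :
    ∫ v in {v : E | r ≤ ‖v‖}, (1 + ‖v‖) ^ (-s) ∂μ ≤
      finrank ℝ E * μ.real (Metric.ball 0 1) * (r ^ (finrank ℝ E - s) / (s - finrank ℝ E)) := by
  let f : ℝ → ℝ := (Ici r).indicator fun y => (1 + y) ^ (-s)
  have hf : ∫ v in {v : E | r ≤ ‖v‖}, (1 + ‖v‖) ^ (-s) ∂μ = ∫ v, f ‖v‖ ∂μ := by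
    rw [← integral_indicator (isClosed_le continuous_const continuous_norm).measurableSet]
    rfl
  have hradial : ∫ y in Ioi (0 : ℝ), y ^ (finrank ℝ E - 1) • f y
      = ∫ y in Ioi r, y ^ (finrank ℝ E - 1) * (1 + y) ^ (-s) := by
    have : (fun y => y ^ (finrank ℝ E - 1) • f y)
        = (Ici r).indicator fun y => y ^ (finrank ℝ E - 1) * (1 + y) ^ (-s) := by
      ext y
      simp only [f, smul_eq_mul, indicator_mul_right]
    rw [this, setIntegral_indicator measurableSet_Ici,
      inter_eq_self_of_subset_right (Ici_subset_Ioi.mpr hr), integral_Ici_eq_integral_Ioi]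
  rw [hf, integral_fun_norm_addHaar, hradial, nsmul_eq_mul, smul_eq_mul, mul_assoc]
  gcongr
  exact setIntegral_Ioi_pow_mul_one_add_rpow_le finrank_pos hs hr

end Kernel

lemma inv_le_rpow_neg {ρ β : ℝ} (hρ : 1 ≤ ρ) (hβ : β ≤ 1) : ρ⁻¹ ≤ ρ ^ (-β) := by
  simpa [Real.rpow_neg_one] using Real.rpow_le_rpow_of_exponent_le hρ (neg_le_neg hβ)

lemma setIntegral_norm_ge_half_le {E : Type*} [Norm E] [MeasurableSpace E] {μ : Measure E}
    {g : E → ℝ} (hg : Integrable g μ) (hg0 : ∀ u, 0 ≤ g u) {β c : ℝ} (hβ : β ≤ 1)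
    (htail : ∀ ρ : ℝ, 1 ≤ ρ → ∫ u in {u | ρ ≤ ‖u‖}, g u ∂μ ≤ c * ρ ^ (-β)) {ρ : ℝ} (hρ : 1 ≤ ρ) :
    ∫ u in {u | ρ / 2 ≤ ‖u‖}, g u ∂μ ≤ (2 * c + 2 * ∫ u, g u ∂μ) * ρ ^ (-β) := by
  have hρ0 : 0 < ρ := by linarith
  have hpow : 0 < ρ ^ (-β) := Real.rpow_pos_of_pos hρ0 _
  have hg_int : 0 ≤ ∫ u, g u ∂μ := integral_nonneg hg0
  have hc : 0 ≤ c := by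
    simpa using (integral_nonneg fun u => hg0 u).trans (htail 1 le_rfl)
  rcases le_or_gt 2 ρ with h2 | h2
  · have h2β : (2 : ℝ) ^ β ≤ 2 := by
      simpa using Real.rpow_le_rpow_of_exponent_le one_le_two hβ
    calc ∫ u in {u | ρ / 2 ≤ ‖u‖}, g u ∂μ ≤ c * (ρ / 2) ^ (-β) := htail _ (by linarith)
      _ = c * 2 ^ β * ρ ^ (-β) := by
        rw [Real.div_rpow hρ0.le zero_le_two, Real.rpow_neg zero_le_two, div_inv_eq_mul]; ring
      _ ≤ (2 * c + 2 * ∫ u, g u ∂μ) * ρ ^ (-β) := by gcongr; nlinarith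
  · -- the tail hypothesis is unavailable at `ρ / 2 < 1`, but there `ρ ^ (-β) ≥ ρ⁻¹ > 1 / 2`
    have hhalf : 1 / 2 < ρ ^ (-β) :=
      (one_div (2 : ℝ) ▸ inv_strictAnti₀ hρ0 h2).trans_le (inv_le_rpow_neg hρ hβ)
    calc ∫ u in {u | ρ / 2 ≤ ‖u‖}, g u ∂μ ≤ ∫ u, g u ∂μ :=
          setIntegral_le_integral hg (.of_forall hg0)
      _ ≤ (2 * c + 2 * ∫ u, g u ∂μ) * ρ ^ (-β) := by nlinarith

section Convolution

variable {G : Type*} [NormedAddCommGroup G] [MeasurableSpace G] [BorelSpace G]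
  {μ : Measure G} [μ.IsAddRightInvariant] {g k : G → ℝ}

lemma setIntegral_norm_ge_comp_sub_le (hg : Integrable g μ) (hg0 : ∀ u, 0 ≤ g u) {r s : ℝ}
    {v : G} (hv : ‖v‖ ≤ s) :
    ∫ u in {u | r + s ≤ ‖u‖}, g (u - v) ∂μ ≤ ∫ w in {w | r ≤ ‖w‖}, g w ∂μ := by
  have hsub : {u : G | r + s ≤ ‖u‖} ⊆ (· - v) ⁻¹' {w | r ≤ ‖w‖} := fun u (hu : r + s ≤ ‖u‖) =>
    show r ≤ ‖u - v‖ by linarith [norm_sub_norm_le u v]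
  calc ∫ u in {u | r + s ≤ ‖u‖}, g (u - v) ∂μ ≤ ∫ u in (· - v) ⁻¹' {w | r ≤ ‖w‖}, g (u - v) ∂μ :=
        setIntegral_mono_set (hg.comp_sub_right v).integrableOn (.of_forall fun _ => hg0 _)
          hsub.eventuallyLE
    _ = ∫ w in {w | r ≤ ‖w‖}, g w ∂μ :=
        (measurePreserving_sub_right μ v).setIntegral_preimage_emb
          (MeasurableEquiv.subRight v).measurableEmbedding _ _

variable [SecondCountableTopology G] [SFinite μ]

lemma integrable_prod_sub_mul (hg : Integrable g μ) (hk : Integrable k μ) :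
    Integrable (fun p : G × G => g (p.1 - p.2) * k p.2) (μ.prod μ) := by
  simpa only [ContinuousLinearMap.mul_apply', mul_comm (k _)] using
    hk.convolution_integrand (ContinuousLinearMap.mul ℝ ℝ) hg

lemma setIntegral_norm_ge_integral_sub_mul_le (hg : Integrable g μ) (hg0 : ∀ u, 0 ≤ g u)
    (hk : Integrable k μ) (hk0 : ∀ v, 0 ≤ k v) (r s : ℝ) :
    ∫ u in {u | r + s ≤ ‖u‖}, ∫ v, g (u - v) * k v ∂μ ∂μ ≤
      (∫ u, g u ∂μ) * (∫ v in {v | s ≤ ‖v‖}, k v ∂μ) +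
        (∫ w in {w | r ≤ ‖w‖}, g w ∂μ) * ∫ v, k v ∂μ := by
  set S := {u : G | r + s ≤ ‖u‖}
  set B := {v : G | s ≤ ‖v‖}
  have hB : MeasurableSet B := measurableSet_le measurable_const measurable_norm
  set T := fun v => ∫ u in S, g (u - v) ∂μ
  have hF : Integrable (fun p : G × G => g (p.1 - p.2) * k p.2) ((μ.restrict S).prod μ) := by
    rw [Measure.restrict_prod_eq_prod_univ]
    exact (integrable_prod_sub_mul hg hk).restrict
  have hswap : ∫ u in S, ∫ v, g (u - v) * k v ∂μ ∂μ = ∫ v, T v * k v ∂μ := by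
    simp_rw [integral_integral_swap (f := fun u v => g (u - v) * k v) hF, T, integral_mul_const]
  have hTk : Integrable (fun v => T v * k v) μ := by
    simpa only [integral_mul_const] using hF.integral_prod_right
  have hT_le : ∀ v, T v ≤ ∫ u, g u ∂μ := fun v =>
    (setIntegral_le_integral (hg.comp_sub_right v) (.of_forall fun _ => hg0 _)).trans_eq
      (integral_sub_right_eq_self g v)
  have hT_near : ∀ v ∈ Bᶜ, T v ≤ ∫ w in {w | r ≤ ‖w‖}, g w ∂μ := fun v (hv : ¬s ≤ ‖v‖) =>
    setIntegral_norm_ge_comp_sub_le hg hg0 (not_le.mp hv).le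
  have hg_tail0 : 0 ≤ ∫ w in {w | r ≤ ‖w‖}, g w ∂μ := integral_nonneg fun _ => hg0 _
  rw [hswap, ← integral_add_compl hB hTk]
  calc ∫ v in B, T v * k v ∂μ + ∫ v in Bᶜ, T v * k v ∂μ
      ≤ ∫ v in B, (∫ u, g u ∂μ) * k v ∂μ + ∫ v in Bᶜ, (∫ w in {w | r ≤ ‖w‖}, g w ∂μ) * k v ∂μ :=
        add_le_add
          (setIntegral_mono_on hTk.integrableOn (hk.const_mul _).integrableOn hB
            fun v _ => mul_le_mul_of_nonneg_right (hT_le v) (hk0 v))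
          (setIntegral_mono_on hTk.integrableOn (hk.const_mul _).integrableOn hB.compl
            fun v hv => mul_le_mul_of_nonneg_right (hT_near v hv) (hk0 v))
    _ ≤ _ := by
      rw [integral_const_mul, integral_const_mul]
      exact add_le_add_right
        (mul_le_mul_of_nonneg_left (setIntegral_le_integral hk (.of_forall hk0)) hg_tail0) _

lemma setIntegral_norm_ge_integral_sub_mul_le_rpow (hg : Integrable g μ) (hg0 : ∀ u, 0 ≤ g u)
    (hk : Integrable k μ) (hk0 : ∀ v, 0 ≤ k v) {β c A : ℝ} (hβ : β ≤ 1)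
    (hgtail : ∀ ρ : ℝ, 1 ≤ ρ → ∫ u in {u | ρ ≤ ‖u‖}, g u ∂μ ≤ c * ρ ^ (-β))
    (hktail : ∀ r : ℝ, 0 < r → ∫ v in {v | r ≤ ‖v‖}, k v ∂μ ≤ A * r⁻¹) {ρ : ℝ} (hρ : 1 ≤ ρ) :
    ∫ u in {u | ρ ≤ ‖u‖}, ∫ v, g (u - v) * k v ∂μ ∂μ ≤
      (2 * (∫ u, g u ∂μ) * A + (2 * c + 2 * ∫ u, g u ∂μ) * ∫ v, k v ∂μ) * ρ ^ (-β) := by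
  have hA : 0 ≤ A := by
    simpa using (integral_nonneg fun v => hk0 v).trans (hktail 1 one_pos)
  have hIg : 0 ≤ ∫ u, g u ∂μ := integral_nonneg hg0
  have hIk : 0 ≤ ∫ v, k v ∂μ := integral_nonneg hk0
  calc ∫ u in {u | ρ ≤ ‖u‖}, ∫ v, g (u - v) * k v ∂μ ∂μ
      = ∫ u in {u | ρ / 2 + ρ / 2 ≤ ‖u‖}, ∫ v, g (u - v) * k v ∂μ ∂μ := by rw [add_halves]
    _ ≤ (∫ u, g u ∂μ) * (∫ v in {v | ρ / 2 ≤ ‖v‖}, k v ∂μ) +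
          (∫ w in {w | ρ / 2 ≤ ‖w‖}, g w ∂μ) * ∫ v, k v ∂μ :=
        setIntegral_norm_ge_integral_sub_mul_le hg hg0 hk hk0 _ _
    _ ≤ (∫ u, g u ∂μ) * (A * (2 / ρ)) + (2 * c + 2 * ∫ u, g u ∂μ) * ρ ^ (-β) * ∫ v, k v ∂μ := by
        gcongr
        · simpa using hktail (ρ / 2) (by linarith)
        · exact setIntegral_norm_ge_half_le hg hg0 hβ hgtail hρ
    _ ≤ _ := by
        have := mul_le_mul_of_nonneg_left (inv_le_rpow_neg hρ hβ)
          (by positivity : 0 ≤ 2 * (∫ u, g u ∂μ) * A)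
        rw [div_eq_mul_inv]
        linarith

end Convolution

theorem statement17_general (d : ℕ) (hd : 0 < d)
    (g : Ed d → ℝ) (hgint : Integrable g) (hgpos : ∀ u, 0 ≤ g u)
    (β c : ℝ) (hβ : 0 < β ∧ β ≤ 1)
    (hgtail : ∀ ρ : ℝ, 1 ≤ ρ → ∫ u in {u : Ed d | ρ ≤ ‖u‖}, g u ≤ c * ρ ^ (-β)) :
    Integrable (fun u : Ed d => ∫ v : Ed d, g (u - v) * (1 + ‖v‖) ^ (-(d : ℝ) - 1)) ∧
    ∃ C : ℝ, 0 < C ∧ ∀ ρ : ℝ, 1 ≤ ρ →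
      ∫ u in {u : Ed d | ρ ≤ ‖u‖},
        (∫ v : Ed d, g (u - v) * (1 + ‖v‖) ^ (-(d : ℝ) - 1)) ≤ C * ρ ^ (-β) := by
  have : NeZero d := ⟨hd.ne'⟩
  have hdim : (finrank ℝ (Ed d) : ℝ) = d := by rw [finrank_euclideanSpace_fin]
  rw [← hdim]
  set k : Ed d → ℝ := fun v => (1 + ‖v‖) ^ (-(finrank ℝ (Ed d) : ℝ) - 1)
  have hk : Integrable k := by
    simpa only [k, neg_add'] using integrable_one_add_norm (μ := volume) (lt_add_one _)
  have hk0 : ∀ v, 0 ≤ k v := fun v => by positivity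
  have hktail (r : ℝ) (hr : 0 < r) : ∫ v in {v : Ed d | r ≤ ‖v‖}, k v ≤
      finrank ℝ (Ed d) * volume.real (Metric.ball (0 : Ed d) 1) * r⁻¹ := by
    simpa only [k, neg_add', sub_add_cancel_left, add_sub_cancel_left, Real.rpow_neg_one,
      div_one] using setIntegral_norm_ge_one_add_norm_rpow_le volume (lt_add_one _) hr
  exact ⟨(integrable_prod_sub_mul hgint hk).integral_prod_left, _, lt_max_of_lt_right one_pos,
    fun ρ hρ => (setIntegral_norm_ge_integral_sub_mul_le_rpow hgint hgpos hk hk0 hβ.2 hgtail hktail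
      hρ).trans (mul_le_mul_of_nonneg_right (le_max_left _ 1) (Real.rpow_nonneg (by linarith) _))⟩

/-- if `g ∈ L¹(ℝ^d)` is nonnegative with `∫_{|u|≥ρ} g ≤ c ρ^{−β}` for
`ρ ≥ 1`, then `h(u) = ∫ g(u−v)(1+|v|)^{−d−1} dv` is in `L¹(ℝ^d)` and satisfies
`∫_{|u|≥ρ} h ≤ C ρ^{−β}` for all `ρ ≥ 1`. -/
theorem statement17 (d : ℕ) (hd : 0 < d)
    (g : Ed d → ℝ) (hgint : Integrable g) (hgpos : ∀ u, 0 ≤ g u)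
    (β c : ℝ) (hβ : 0 < β ∧ β ≤ 1) (hc : 0 < c)
    (hgtail : ∀ ρ : ℝ, 1 ≤ ρ → ∫ u in {u : Ed d | ρ ≤ ‖u‖}, g u ≤ c * ρ ^ (-β)) :
    Integrable (fun u : Ed d => ∫ v : Ed d, g (u - v) * (1 + ‖v‖) ^ (-(d : ℝ) - 1)) ∧
    ∃ C : ℝ, 0 < C ∧ ∀ ρ : ℝ, 1 ≤ ρ →
      ∫ u in {u : Ed d | ρ ≤ ‖u‖},
        (∫ v : Ed d, g (u - v) * (1 + ‖v‖) ^ (-(d : ℝ) - 1)) ≤ C * ρ ^ (-β) :=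
  statement17_general d hd g hgint hgpos β c hβ hgtail
end
end
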